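/- (Theorem 2, high incomparable costs regime) Fix G > 0 and costs C_i, C_j > 0 with C_j > 1 + C_i. Then the pair (B_i*, B_j*) = (G·e^{−(2+C_i)}, 0) is the unique Nash equilibrium of the investment game (operator i acts as a monopolist and operator j stays out of the market), and the equilibrium profits are π_i = G·e^{−(2+C_i)} and π_j = 0. -/
import Mathlib


/-- Operator profit in the high-SNR investment game: the operator with unit cost `C`
leasing `B` while the competitor leases `B'` earns `B·(ln(G/(B + B')) − 1 − C)`. -/
noncomputable def invProfit (G C B B' : ℝ) : ℝ :=
  B * (Real.log (G / (B + B')) - 1 - C)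

/-- `(Bi, Bj)` is a Nash equilibrium of the high-SNR investment game with coupled
strategy set `{(Bi, Bj) : Bi, Bj ≥ 0, Bi + Bj ≤ G·e^{−2}}`. -/
def IsInvestmentNE (G Ci Cj Bi Bj : ℝ) : Prop :=
  0 ≤ Bi ∧ 0 ≤ Bj ∧ Bi + Bj ≤ G * Real.exp (-2) ∧
  (∀ B : ℝ, 0 ≤ B → B ≤ G * Real.exp (-2) - Bj → invProfit G Ci B Bj ≤ invProfit G Ci Bi Bj) ∧
  (∀ B : ℝ, 0 ≤ B → B ≤ G * Real.exp (-2) - Bi → invProfit G Cj B Bi ≤ invProfit G Cj Bj Bi)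

lemma key_lt {x : ℝ} (hx : 0 < x) (hne : x ≠ 1) : x * (1 - Real.log x) < 1 := by
  have hlog : Real.log (1/x) ≠ 0 := by
    intro h
    rcases Real.log_eq_zero.mp h with h' | h' | h'
    · have : (0:ℝ) < 1/x := by positivity
      linarith
    · apply hne; field_simp at h'; linarith
    · have : (0:ℝ) < 1/x := by positivity
      linarith
  have h := Real.add_one_lt_exp hlog
  rw [Real.exp_log (by positivity)] at h
  rw [Real.log_div one_ne_zero (ne_of_gt hx), Real.log_one] at h
  have hx1 : x * (1/x) = 1 := mul_one_div_cancel (ne_of_gt hx)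
  nlinarith [mul_lt_mul_of_pos_left h hx]

lemma logGM (G C : ℝ) (hG : 0 < G) :
    Real.log (G / (G * Real.exp (-(2+C)))) = 2 + C := by
  have : G / (G * Real.exp (-(2+C))) = Real.exp (2+C) := by
    rw [Real.exp_neg]; field_simp
  rw [this, Real.log_exp]

lemma mono_lt (G C B : ℝ) (hG : 0 < G) (hB : 0 ≤ B)
    (hne : B ≠ G * Real.exp (-(2+C))) :
    B * (Real.log (G / B) - 1 - C) < G * Real.exp (-(2+C)) := by
  set M := G * Real.exp (-(2+C)) with hM
  have hMpos : 0 < M := by positivity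
  rcases eq_or_lt_of_le hB with h0 | hBpos
  · rw [← h0]; simpa using hMpos
  · have hx : 0 < B / M := by positivity
    have hxne : B / M ≠ 1 := by
      intro h; apply hne; field_simp at h; linarith
    have hk := key_lt hx hxne
    have hlog : Real.log (G / B) - 1 - C = 1 - Real.log (B / M) := by
      rw [Real.log_div (ne_of_gt hG) (ne_of_gt hBpos),
          Real.log_div (ne_of_gt hBpos) (ne_of_gt hMpos), hM,
          Real.log_mul (ne_of_gt hG) (Real.exp_ne_zero _), Real.log_exp]
      ring
    rw [hlog]
    have : B * (1 - Real.log (B / M)) = M * (B / M * (1 - Real.log (B / M))) := by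
      field_simp
    rw [this]
    calc M * (B / M * (1 - Real.log (B / M))) < M * 1 :=
          (mul_lt_mul_iff_right₀ hMpos).mpr hk
      _ = M := mul_one M

lemma mono_le (G C B : ℝ) (hG : 0 < G) (hB : 0 ≤ B) :
    B * (Real.log (G / B) - 1 - C) ≤ G * Real.exp (-(2+C)) := by
  by_cases h : B = G * Real.exp (-(2+C))
  · subst h
    rw [logGM G C hG]
    have : (2 + C - 1 - C) = 1 := by ring
    rw [this, mul_one]
  · exact le_of_lt (mono_lt G C B hG hB h)

/-- Theorem 2, high incomparable costs regime (`Cj > 1 + Ci`): the pair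
`(G·e^{−(2+Ci)}, 0)` is the unique Nash equilibrium of the investment game
(operator `i` is a monopolist and operator `j` stays out), with profits
`G·e^{−(2+Ci)}` and `0`. -/
theorem stmt_10 (G Ci Cj : ℝ) (hG : 0 < G) (hCi : 0 < Ci) (hCj : 0 < Cj)
    (hcost : 1 + Ci < Cj) :
    IsInvestmentNE G Ci Cj (G * Real.exp (-(2 + Ci))) 0 ∧
    (∀ Bi Bj : ℝ, IsInvestmentNE G Ci Cj Bi Bj →
      Bi = G * Real.exp (-(2 + Ci)) ∧ Bj = 0) ∧
    invProfit G Ci (G * Real.exp (-(2 + Ci))) 0 = G * Real.exp (-(2 + Ci)) ∧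
    invProfit G Cj 0 (G * Real.exp (-(2 + Ci))) = 0 := by
  set M := G * Real.exp (-(2 + Ci)) with hMdef
  have hMpos : 0 < M := by positivity
  have hM2 : M ≤ G * Real.exp (-2) := by
    apply mul_le_mul_of_nonneg_left _ hG.le
    exact Real.exp_le_exp.mpr (by linarith)
  have logM : Real.log (G / M) = 2 + Ci := logGM G Ci hG
  have piM : invProfit G Ci M 0 = M := by
    unfold invProfit
    rw [add_zero, logM]; ring
  refine ⟨⟨hMpos.le, le_rfl, by simpa using hM2, ?_, ?_⟩, ?_, piM, by simp [invProfit]⟩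
  · -- operator i's best response condition
    intro B hB _
    rw [piM]
    unfold invProfit
    rw [add_zero]
    exact mono_le G Ci B hG hB
  · -- operator j's best response condition
    intro B hB hBle
    have hBM : 0 < B + M := by linarith
    have hlog : Real.log (G / (B + M)) ≤ 2 + Ci := by
      rw [← logM]
      apply Real.log_le_log (by positivity)
      exact div_le_div_of_nonneg_left hG.le hMpos (by linarith)
    have h0 : invProfit G Cj 0 M = 0 := by simp [invProfit]
    rw [h0]
    unfold invProfit
    have : B * (Real.log (G / (B + M)) - 1 - Cj) ≤ B * 0 :=
      mul_le_mul_of_nonneg_left (by linarith) hB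
    simpa using this
  · -- uniqueness
    intro Bi Bj hNE
    obtain ⟨h1, h2, h3, h4, h5⟩ := hNE
    have hBj0 : Bj = 0 := by
      by_contra hne
      have hBjpos : 0 < Bj := lt_of_le_of_ne h2 (Ne.symm hne)
      have hj := h5 0 le_rfl (by linarith)
      have hj0 : invProfit G Cj 0 Bi = 0 := by simp [invProfit]
      rw [hj0] at hj
      unfold invProfit at hj
      have hF : 1 + Cj ≤ Real.log (G / (Bj + Bi)) := by
        by_contra hc
        push_neg at hc
        have : Bj * (Real.log (G / (Bj + Bi)) - 1 - Cj) < 0 :=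
          mul_neg_of_pos_of_neg hBjpos (by linarith)
        linarith
      have hF' : 1 + Cj ≤ Real.log (G / (Bi + Bj)) := by
        rwa [add_comm Bj Bi] at hF
      have hs : 0 < Bi + Bj := by linarith
      -- Bi + Bj < M
      have h1' : Real.exp (1 + Cj) ≤ G / (Bi + Bj) := by
        have := Real.exp_le_exp.mpr hF'
        rwa [Real.exp_log (by positivity)] at this
      have h2' : Real.exp (1 + Cj) * (Bi + Bj) ≤ G := (le_div_iff₀ hs).mp h1'
      have hsM : Bi + Bj < M := by
        have a1 : Real.exp (1 + Cj) * (Bi + Bj) * Real.exp (-(1 + Cj)) ≤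
            G * Real.exp (-(1 + Cj)) :=
          mul_le_mul_of_nonneg_right h2' (Real.exp_pos _).le
        have a2 : Real.exp (1 + Cj) * (Bi + Bj) * Real.exp (-(1 + Cj)) = Bi + Bj := by
          rw [mul_comm (Real.exp (1 + Cj)) (Bi + Bj), mul_assoc, ← Real.exp_add,
            show (1 + Cj) + (-(1 + Cj)) = (0:ℝ) by ring, Real.exp_zero, mul_one]
        have a3 : G * Real.exp (-(1 + Cj)) < G * Real.exp (-(2 + Ci)) := by
          exact mul_lt_mul_of_pos_left (Real.exp_lt_exp.mpr (by linarith)) hG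
        rw [a2] at a1
        rw [hMdef]
        linarith
      -- profitable deviation for i: B0 = M - Bj
      have hd := h4 (M - Bj) (by linarith) (by linarith)
      have hL : invProfit G Ci (M - Bj) Bj = M - Bj := by
        unfold invProfit
        have : M - Bj + Bj = M := by ring
        rw [this, logM]; ring
      rw [hL] at hd
      have hmono : (Bi + Bj) * (Real.log (G / (Bi + Bj)) - 1 - Ci) < M :=
        mono_lt G Ci (Bi + Bj) hG hs.le (ne_of_lt hsM)
      have hfinal : invProfit G Ci Bi Bj < M - Bj := by
        unfold invProfit
        set L := Real.log (G / (Bi + Bj)) with hL2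
        have hsplit : Bi * (L - 1 - Ci) =
            (Bi + Bj) * (L - 1 - Ci) - Bj * (L - 1 - Ci) := by ring
        have hb : Bj * 1 ≤ Bj * (L - 1 - Ci) :=
          mul_le_mul_of_nonneg_left (by linarith) hBjpos.le
        rw [hsplit]
        linarith
      linarith
    subst hBj0
    have hd2 := h4 M hMpos.le (by linarith)
    rw [piM] at hd2
    have hBiM : Bi = M := by
      by_contra hne
      have := mono_lt G Ci Bi hG h1 hne
      unfold invProfit at hd2
      rw [add_zero] at hd2
      rw [← hMdef] at this
      linarith
    exact ⟨hBiM, rfl⟩
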